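/- For n≥2, there is a unique group homomorphism π: B(B_{n+1}) → ℤ with π(σ_i) = 0 for all 1≤i≤n and π(t) = 1 (the exponent sum of t), and its kernel is exactly the subgroup of B(B_{n+1}) generated by σ_1,…,σ_n and a_{n+1} = φ_{n+1}σ_nφ_{n+1}^{-1}, where φ_{n+1} = tσ_1⋯σ_n. In other words, an element x of B(B_{n+1}) lies in the subgroup generated by σ_1,…,σ_n,a_{n+1} if and only if the sum of the exponents of t in any expression of x is zero. -/

import Mathlib

/-- Relators of the `B`-type braid group `B(B_{n+1})`: generator `some i` (`i : Fin n`)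
stands for `σ_{i+1}`, and `none` stands for `t`. -/
def braidRelsB (n : ℕ) : Set (FreeGroup (Option (Fin n))) :=
  { r | (∃ i j : Fin n, (i : ℕ) + 2 ≤ (j : ℕ) ∧
          r = FreeGroup.of (some i) * FreeGroup.of (some j) *
              (FreeGroup.of (some j) * FreeGroup.of (some i))⁻¹) ∨
        (∃ i j : Fin n, (j : ℕ) = (i : ℕ) + 1 ∧
          r = FreeGroup.of (some i) * FreeGroup.of (some j) * FreeGroup.of (some i) *
              (FreeGroup.of (some j) * FreeGroup.of (some i) * FreeGroup.of (some j))⁻¹) ∨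
        (∃ i : Fin n, 1 ≤ (i : ℕ) ∧
          r = FreeGroup.of (some i) * FreeGroup.of none *
              (FreeGroup.of none * FreeGroup.of (some i))⁻¹) ∨
        (∃ i : Fin n, (i : ℕ) = 0 ∧
          r = FreeGroup.of (some i) * FreeGroup.of none * FreeGroup.of (some i) *
              FreeGroup.of none *
              (FreeGroup.of none * FreeGroup.of (some i) * FreeGroup.of none *
                FreeGroup.of (some i))⁻¹) }

/-- The `B`-type braid group `B(B_{n+1})`, with generators `σ_1, …, σ_n` and `t`. -/
abbrev BraidB (n : ℕ) : Type := PresentedGroup (braidRelsB n)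

/-- `φ_{n+1} = t σ_1 σ_2 ⋯ σ_n` in `B(B_{n+1})`. -/
noncomputable def phiB (n : ℕ) : BraidB n :=
  PresentedGroup.of none *
    ((List.finRange n).map fun i => (PresentedGroup.of (some i) : BraidB n)).prod

/-- `a_{n+1} = φ_{n+1} σ_n φ_{n+1}⁻¹` in `B(B_{n+1})`. -/
noncomputable def aB (n : ℕ) (h : 0 < n) : BraidB n :=
  phiB n * PresentedGroup.of (some (⟨n - 1, by omega⟩ : Fin n)) * (phiB n)⁻¹

/-!
The exponent sum of `t` is well defined because every relator has `t`-exponent sum zero.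
For the kernel, let `H` be the subgroup generated by `σ_1, …, σ_n` and `a = a_{n+1}`.
The type-`A` braid relations give `(σ_1⋯σ_n) σ_n (σ_1⋯σ_n)⁻¹ = P⁻¹ σ_1 P` with `P = σ_2⋯σ_n`,
and `P` commutes with `t`, so `a = P⁻¹ b P` with `b = t σ_1 t⁻¹`; in particular `b ∈ H`.
The relation `σ_1 t σ_1 t = t σ_1 t σ_1` gives `t⁻¹ σ_1 t = σ_1 b σ_1⁻¹` and
`t b t⁻¹ = b⁻¹ σ_1 b`, so conjugation by `t^{±1}` preserves `H`. Hence `H` is normal,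
every element is `h t^k` with `h ∈ H`, and such an element has exponent sum `k`.
-/

open Subgroup

section GroupLemmas

variable {G : Type*} [Group G]

theorem Subgroup.mem_normalizer_closure_of_conj_mem {S : Set G} {g : G}
    (h₁ : ∀ s ∈ S, g * s * g⁻¹ ∈ closure S) (h₂ : ∀ s ∈ S, g⁻¹ * s * g ∈ closure S) :
    g ∈ normalizer (closure S : Set G) := by
  have conj_mem : ∀ x : G, (∀ s ∈ S, x * s * x⁻¹ ∈ closure S) →
      ∀ y ∈ closure S, x * y * x⁻¹ ∈ closure S := fun x hx y hy =>
    (closure_le ((closure S).comap (MulAut.conj x).toMonoidHom)).2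
      (fun s hs => by simpa using hx s hs) hy
  refine mem_normalizer_iff.2 fun y => ⟨conj_mem g h₁ y, fun hy => ?_⟩
  simpa [mul_assoc] using conj_mem g⁻¹ (by simpa using h₂) _ hy

theorem MonoidHom.ker_eq_of_sup_zpowers_eq_top {M : Type*} [Group M] {H : Subgroup G} [H.Normal]
    {t : G} (hsup : H ⊔ zpowers t = ⊤) {π : G →* M} (hH : H ≤ π.ker)
    (ht : ¬IsOfFinOrder (π t)) : π.ker = H := by
  refine le_antisymm (fun x hx => ?_) hH
  obtain ⟨y, hy, _, hz, rfl⟩ := mem_sup_of_normal_left.1 (hsup ▸ mem_top x)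
  obtain ⟨k, rfl⟩ := mem_zpowers_iff.1 hz
  have hk : π t ^ k = π t ^ (0 : ℤ) := by
    simpa [MonoidHom.mem_ker.1 (hH hy)] using hx
  rwa [injective_zpow_iff_not_isOfFinOrder.2 ht hk, zpow_zero, mul_one]

theorem Commute.conj_inv_mul_mul {g p : G} (hgp : Commute g p) (x : G) :
    g * (p⁻¹ * x * p) * g⁻¹ = p⁻¹ * (g * x * g⁻¹) * p := by
  calc g * (p⁻¹ * x * p) * g⁻¹ = (g * p * g⁻¹)⁻¹ * (g * x * g⁻¹) * (g * p * g⁻¹) := by group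
    _ = p⁻¹ * (g * x * g⁻¹) * p := by rw [hgp.mul_inv_cancel]

variable {x y : G}

theorem inv_mul_mul_eq_of_mul_mul_mul_eq (h : x * y * x * y = y * x * y * x) :
    y⁻¹ * x * y = x * (y * x * y⁻¹) * x⁻¹ := by
  calc y⁻¹ * x * y = y⁻¹ * (x * y * x * y) * y⁻¹ * x⁻¹ := by group
    _ = y⁻¹ * (y * x * y * x) * y⁻¹ * x⁻¹ := by rw [h]
    _ = x * (y * x * y⁻¹) * x⁻¹ := by group

theorem conj_conj_eq_of_mul_mul_mul_eq (h : x * y * x * y = y * x * y * x) :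
    y * (y * x * y⁻¹) * y⁻¹ = (y * x * y⁻¹)⁻¹ * x * (y * x * y⁻¹) := by
  calc y * (y * x * y⁻¹) * y⁻¹ = y * x⁻¹ * y⁻¹ * (y * x * y * x) * y⁻¹ * y⁻¹ := by group
    _ = y * x⁻¹ * y⁻¹ * (x * y * x * y) * y⁻¹ * y⁻¹ := by rw [h]
    _ = (y * x * y⁻¹)⁻¹ * x * (y * x * y⁻¹) := by group

end GroupLemmas

section BraidChain

variable {G : Type*} [Group G] {s : ℕ → G}

def chainProd (s : ℕ → G) (k m : ℕ) : G := ((List.range' k m).map s).prod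

@[simp]
theorem chainProd_zero (k : ℕ) : chainProd s k 0 = 1 := rfl

theorem chainProd_succ (k m : ℕ) : chainProd s k (m + 1) = s k * chainProd s (k + 1) m := by
  simp [chainProd, List.range'_succ]

theorem commute_chainProd {x : G} {k m : ℕ} (h : ∀ j, k ≤ j → j < k + m → Commute x (s j)) :
    Commute x (chainProd s k m) :=
  Commute.list_prod_right _ _ fun y hy => by
    obtain ⟨j, hj, rfl⟩ := List.mem_map.1 hy
    rw [List.mem_range'_1] at hj
    exact h j hj.1 hj.2

theorem chainProd_mul_mul_chainProd_mul {N : ℕ}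
    (hcomm : ∀ i j, i + 2 ≤ j → j < N → Commute (s i) (s j))
    (hbraid : ∀ i, i + 1 < N → s i * s (i + 1) * s i = s (i + 1) * s i * s (i + 1))
    {k m : ℕ} (hkm : k + m < N) :
    chainProd s (k + 1) m * s k * chainProd s (k + 1) m * s (k + m) =
      s k * chainProd s (k + 1) m * s k * chainProd s (k + 1) m := by
  induction m generalizing k with
  | zero => simp
  | succ m ih =>
    have hQ : Commute (s k) (chainProd s (k + 2) m) :=
      commute_chainProd fun j hj hjm => hcomm k j hj (by omega)
    have ih' := ih (k := k + 1) (by omega)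
    have hb := hbraid k (by omega)
    rw [chainProd_succ, show k + (m + 1) = k + 1 + m by omega]
    rw [show k + 1 + 1 = k + 2 by omega] at ih'
    generalize chainProd s (k + 2) m = Q at hQ ih' ⊢
    generalize s (k + 1 + m) = z at ih' ⊢
    generalize s (k + 1) = y at ih' hb ⊢
    generalize s k = x at hQ hb ⊢
    calc y * Q * x * (y * Q) * z = y * (Q * x) * (y * Q) * z := by group
      _ = y * x * (Q * y * Q * z) := by rw [← hQ.eq]; group
      _ = (y * x * y) * Q * y * Q := by rw [ih']; group
      _ = x * y * (x * Q) * y * Q := by rw [← hb]; group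
      _ = x * (y * Q) * x * (y * Q) := by rw [hQ.eq]; group

theorem chainProd_conj {N : ℕ}
    (hcomm : ∀ i j, i + 2 ≤ j → j < N → Commute (s i) (s j))
    (hbraid : ∀ i, i + 1 < N → s i * s (i + 1) * s i = s (i + 1) * s i * s (i + 1))
    {k m : ℕ} (hkm : k + m < N) :
    chainProd s k (m + 1) * s (k + m) * (chainProd s k (m + 1))⁻¹ =
      (chainProd s (k + 1) m)⁻¹ * s k * chainProd s (k + 1) m := by
  have h := chainProd_mul_mul_chainProd_mul hcomm hbraid hkm
  rw [chainProd_succ]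
  generalize chainProd s (k + 1) m = Q at h ⊢
  calc s k * Q * s (k + m) * (s k * Q)⁻¹ = Q⁻¹ * (Q * s k * Q * s (k + m)) * Q⁻¹ * (s k)⁻¹ := by
        group
    _ = Q⁻¹ * s k * Q := by rw [h]; group

end BraidChain

namespace BraidB

variable {n : ℕ}

def t (n : ℕ) : BraidB n := PresentedGroup.of none

/-- `sig n k` is `σ_{k+1}` for `k < n`, and `1` otherwise. -/
def sig (n k : ℕ) : BraidB n := if h : k < n then PresentedGroup.of (some ⟨k, h⟩) else 1

theorem sig_of_lt {k : ℕ} (h : k < n) : sig n k = PresentedGroup.of (some ⟨k, h⟩) := dif_pos h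

theorem commute_sig_sig {i j : ℕ} (hij : i + 2 ≤ j) (hj : j < n) :
    Commute (sig n i) (sig n j) := by
  have hr := PresentedGroup.one_of_mem (rels := braidRelsB n)
    (Or.inl ⟨⟨i, by omega⟩, ⟨j, hj⟩, hij, rfl⟩)
  simp only [map_mul, map_inv, mul_inv_eq_one] at hr
  rwa [sig_of_lt (by omega), sig_of_lt hj]

theorem sig_mul_sig_mul_sig {i : ℕ} (hi : i + 1 < n) :
    sig n i * sig n (i + 1) * sig n i = sig n (i + 1) * sig n i * sig n (i + 1) := by
  have hr := PresentedGroup.one_of_mem (rels := braidRelsB n)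
    (Or.inr <| Or.inl ⟨⟨i, by omega⟩, ⟨i + 1, hi⟩, rfl, rfl⟩)
  simp only [map_mul, map_inv, mul_inv_eq_one] at hr
  rwa [sig_of_lt (by omega), sig_of_lt hi]

theorem commute_sig_t {i : ℕ} (h1 : 1 ≤ i) (hi : i < n) : Commute (sig n i) (t n) := by
  have hr := PresentedGroup.one_of_mem (rels := braidRelsB n)
    (Or.inr <| Or.inr <| Or.inl ⟨⟨i, hi⟩, h1, rfl⟩)
  simp only [map_mul, map_inv, mul_inv_eq_one] at hr
  rwa [sig_of_lt hi]

theorem sig_zero_mul_t_mul_sig_zero_mul_t (h : 0 < n) :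
    sig n 0 * t n * sig n 0 * t n = t n * sig n 0 * t n * sig n 0 := by
  have hr := PresentedGroup.one_of_mem (rels := braidRelsB n)
    (Or.inr <| Or.inr <| Or.inr ⟨⟨0, h⟩, rfl, rfl⟩)
  simp only [map_mul, map_inv, mul_inv_eq_one] at hr
  rwa [sig_of_lt h]

theorem commute_t_chainProd_sig (m : ℕ) (hm : m < n) : Commute (t n) (chainProd (sig n) 1 m) :=
  commute_chainProd fun j hj hjm => (commute_sig_t hj (by omega)).symm

theorem phiB_eq : phiB n = t n * chainProd (sig n) 0 n := by
  rw [phiB, chainProd, ← List.range_eq_range', ← List.map_coe_finRange_eq_range, List.map_map]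
  exact congrArg (t n * ·) <| congrArg List.prod <|
    List.map_congr_left fun i _ => (sig_of_lt i.isLt).symm

theorem aB_eq (h : 0 < n) :
    aB n h = (chainProd (sig n) 1 (n - 1))⁻¹ * (t n * sig n 0 * (t n)⁻¹) *
      chainProd (sig n) 1 (n - 1) := by
  have hconj := chainProd_conj (s := sig n) (fun i j hij hj => commute_sig_sig hij hj)
    (fun i hi => sig_mul_sig_mul_sig hi) (k := 0) (m := n - 1) (by omega)
  rw [zero_add, Nat.sub_add_cancel h] at hconj
  rw [aB, phiB_eq, ← sig_of_lt (by omega : n - 1 < n),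
    ← (commute_t_chainProd_sig (n - 1) (by omega)).conj_inv_mul_mul, ← hconj]
  group

def tExponentSum (n : ℕ) : BraidB n →* Multiplicative ℤ :=
  PresentedGroup.toGroup
    (f := fun z : Option (Fin n) => z.elim (Multiplicative.ofAdd 1) fun _ => 1)
    (by rintro r (⟨i, j, -, rfl⟩ | ⟨i, j, -, rfl⟩ | ⟨i, -, rfl⟩ | ⟨i, -, rfl⟩) <;> simp)

theorem tExponentSum_of_some (i : Fin n) : tExponentSum n (PresentedGroup.of (some i)) = 1 :=
  PresentedGroup.toGroup.of _

theorem tExponentSum_t : tExponentSum n (t n) = Multiplicative.ofAdd 1 :=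
  PresentedGroup.toGroup.of _

def closureSigmaA (n : ℕ) (h : 0 < n) : Subgroup (BraidB n) :=
  closure ({x | ∃ i : Fin n, x = PresentedGroup.of (some i)} ∪ {aB n h})

variable (h : 0 < n)

theorem sig_mem_closureSigmaA (k : ℕ) : sig n k ∈ closureSigmaA n h := by
  unfold sig
  split_ifs
  exacts [subset_closure (Or.inl ⟨_, rfl⟩), one_mem _]

theorem chainProd_sig_mem_closureSigmaA (k m : ℕ) : chainProd (sig n) k m ∈ closureSigmaA n h :=
  list_prod_mem fun _ hx => by
    obtain ⟨j, -, rfl⟩ := List.mem_map.1 hx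
    exact sig_mem_closureSigmaA h j

theorem t_conj_sig_zero_mem_closureSigmaA : t n * sig n 0 * (t n)⁻¹ ∈ closureSigmaA n h := by
  have hP := chainProd_sig_mem_closureSigmaA h 1 (n - 1)
  have ha : aB n h ∈ closureSigmaA n h := subset_closure (Or.inr rfl)
  rw [aB_eq h] at ha
  simpa [mul_assoc] using mul_mem (mul_mem hP ha) (inv_mem hP)

theorem t_mem_normalizer_closureSigmaA : t n ∈ normalizer (closureSigmaA n h : Set (BraidB n)) := by
  set P := chainProd (sig n) 1 (n - 1)
  have hP : P ∈ closureSigmaA n h := chainProd_sig_mem_closureSigmaA h 1 (n - 1)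
  have hPt : Commute (t n) P := commute_t_chainProd_sig (n - 1) (by omega)
  have hσ := sig_mem_closureSigmaA h
  have hb := t_conj_sig_zero_mem_closureSigmaA h
  have h4 := sig_zero_mul_t_mul_sig_zero_mul_t h
  refine mem_normalizer_closure_of_conj_mem ?_ ?_ <;> rintro _ (⟨⟨k, hk⟩, rfl⟩ | rfl) <;>
    change _ ∈ closureSigmaA n h
  · rw [← sig_of_lt hk]
    rcases Nat.eq_zero_or_pos k with rfl | hk1
    · exact hb
    · rw [(commute_sig_t hk1 hk).symm.mul_inv_cancel]
      exact hσ k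
  · rw [aB_eq h, hPt.conj_inv_mul_mul, conj_conj_eq_of_mul_mul_mul_eq h4]
    exact mul_mem (mul_mem (inv_mem hP) (mul_mem (mul_mem (inv_mem hb) (hσ 0)) hb)) hP
  · rw [← sig_of_lt hk]
    rcases Nat.eq_zero_or_pos k with rfl | hk1
    · rw [inv_mul_mul_eq_of_mul_mul_mul_eq h4]
      exact mul_mem (mul_mem (hσ 0) hb) (inv_mem (hσ 0))
    · rw [(commute_sig_t hk1 hk).symm.inv_mul_cancel]
      exact hσ k
  · have hconj := hPt.inv_left.conj_inv_mul_mul (t n * sig n 0 * (t n)⁻¹)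
    rw [inv_inv] at hconj
    rw [aB_eq h, hconj, show (t n)⁻¹ * (t n * sig n 0 * (t n)⁻¹) * t n = sig n 0 by group]
    exact mul_mem (mul_mem (inv_mem hP) (hσ 0)) hP

instance closureSigmaA_normal : (closureSigmaA n h).Normal := by
  rw [← normalizer_eq_top_iff, eq_top_iff, ← PresentedGroup.closure_range_of, closure_le]
  rintro _ ⟨_ | i, rfl⟩
  · exact t_mem_normalizer_closureSigmaA h
  · exact le_normalizer (subset_closure (Or.inl ⟨i, rfl⟩))

theorem closureSigmaA_sup_zpowers_t : closureSigmaA n h ⊔ zpowers (t n) = ⊤ := by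
  rw [eq_top_iff, ← PresentedGroup.closure_range_of, closure_le]
  rintro _ ⟨_ | i, rfl⟩
  · exact mem_sup_right (mem_zpowers _)
  · exact mem_sup_left (subset_closure (Or.inl ⟨i, rfl⟩))

theorem closureSigmaA_le_ker_tExponentSum : closureSigmaA n h ≤ (tExponentSum n).ker := by
  rw [closureSigmaA, closure_le]
  rintro _ (⟨i, rfl⟩ | rfl)
  · exact tExponentSum_of_some i
  · simp [aB, tExponentSum_of_some]

end BraidB

open BraidB in
theorem stmt_2 (n : ℕ) (hn : 2 ≤ n) :
    ∃ π : BraidB n →* Multiplicative ℤ,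
      ((∀ i : Fin n, π (PresentedGroup.of (some i)) = 1) ∧
        π (PresentedGroup.of none) = Multiplicative.ofAdd 1) ∧
      (∀ π' : BraidB n →* Multiplicative ℤ,
        ((∀ i : Fin n, π' (PresentedGroup.of (some i)) = 1) ∧
          π' (PresentedGroup.of none) = Multiplicative.ofAdd 1) → π' = π) ∧
      π.ker = Subgroup.closure
        ({ x : BraidB n | ∃ i : Fin n, x = PresentedGroup.of (some i) } ∪
          { aB n (by omega) }) := by
  have h : 0 < n := by omega
  refine ⟨tExponentSum n, ⟨tExponentSum_of_some, tExponentSum_t⟩,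
    fun π' ⟨hσ, ht⟩ => PresentedGroup.ext ?_, ?_⟩
  · rintro (_ | i)
    · exact ht.trans tExponentSum_t.symm
    · exact (hσ i).trans (tExponentSum_of_some i).symm
  · exact MonoidHom.ker_eq_of_sup_zpowers_eq_top (closureSigmaA_sup_zpowers_t h)
      (closureSigmaA_le_ker_tExponentSum h) (by simp [tExponentSum_t, isOfFinOrder_iff_eq_one])
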